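/- arXiv:1805.07681 — 4 statements merged into one kernel-verified Lean document; each statement's English description precedes it below -/
import Mathlib

section
/- If r is a rational number that equals the real part of some complex root of unity, then r ∈ {0, 1, -1, 1/2, -1/2}. -/
/-! A root of unity is `exp (2πi k/n)`, so its real part is `cos (q π)` with `q = 2k/n` rational,
and Niven's theorem lists the rational values of cosine at rational multiples of `π`. -/

open Real

theorem Complex.exists_rat_re_eq_cos_of_pow_eq_one {z : ℂ} {n : ℕ} (hn : n ≠ 0) (hz : z ^ n = 1) :
    ∃ q : ℚ, z.re = Real.cos (q * π) := by
  have : NeZero n := ⟨hn⟩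
  obtain ⟨k, -, rfl⟩ := (isPrimitiveRoot_exp n hn).eq_pow_of_pow_eq_one hz
  refine ⟨2 * k / n, ?_⟩
  rw [← exp_nat_mul, ← exp_ofReal_mul_I_re]
  congr 2
  push_cast
  ring

theorem stmt_1 (r : ℚ)
    (h : ∃ z : ℂ, (∃ n : ℕ, 0 < n ∧ z ^ n = 1) ∧ z.re = (r : ℝ)) :
    r ∈ ({0, 1, -1, 1/2, -1/2} : Set ℚ) := by
  obtain ⟨z, ⟨n, hn, hz⟩, hre⟩ := h
  obtain ⟨q, hq⟩ := Complex.exists_rat_re_eq_cos_of_pow_eq_one hn.ne' hz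
  have hr : (r : ℝ) ∈ ({-1, -1 / 2, 0, 1 / 2, 1} : Set ℝ) := by
    rw [← hre, hq]
    exact niven ⟨q, rfl⟩ ⟨r, hq ▸ hre⟩
  rw [← (Rat.cast_injective (α := ℝ)).mem_set_image]
  simp only [Set.image_insert_eq, Set.image_singleton]
  push_cast
  grind
end

section
/- For d ≥ 2 and q ≥ 2, all eigenvalues 1 − qi/(d(q−1)), i = 0,…,d, of the transition matrix of the Hamming graph H(d,q) lie in the set {0, 1, −1, 1/2, −1/2} if and only if (d, q) ∈ {(2,2), (3,3), (4,2)}. -/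
theorem stmt_10 (d q : ℕ) (hd : 2 ≤ d) (hq : 2 ≤ q) :
    (∀ i : ℕ, i ≤ d →
        (1 - (q * i : ℚ) / (d * (q - 1)) : ℚ) ∈ ({0, 1, -1, 1/2, -1/2} : Set ℚ)) ↔
      (d, q) ∈ ({(2, 2), (3, 3), (4, 2)} : Set (ℕ × ℕ)) := by
  have hqQ : (2:ℚ) ≤ (q:ℚ) := by exact_mod_cast hq
  have hdQ : (2:ℚ) ≤ (d:ℚ) := by exact_mod_cast hd
  have hpos : (0:ℚ) < (d:ℚ) * ((q:ℚ) - 1) := by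
    apply mul_pos <;> linarith
  constructor
  · intro h
    have hd4 : d ≤ 4 := by
      by_contra hd'
      push_neg at hd'
      have hdQ5 : (5:ℚ) ≤ (d:ℚ) := by exact_mod_cast hd'
      have h1 := h 1 (by omega)
      have hlt : ((q:ℚ) * 1) / ((d:ℚ) * ((q:ℚ) - 1)) < 1/2 := by
        rw [div_lt_iff₀ hpos]; nlinarith
      have hgt : 0 < ((q:ℚ) * 1) / ((d:ℚ) * ((q:ℚ) - 1)) :=
        div_pos (by linarith) hpos
      simp only [Set.mem_insert_iff, Set.mem_singleton_iff] at h1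
      rcases h1 with h1 | h1 | h1 | h1 | h1 <;> linarith
    have hq3 : q ≤ 3 := by
      by_contra hq'
      push_neg at hq'
      have hqQ4 : (4:ℚ) ≤ (q:ℚ) := by exact_mod_cast hq'
      have h1 := h d le_rfl
      have hlt : ((q:ℚ) * d) / ((d:ℚ) * ((q:ℚ) - 1)) < 3/2 := by
        rw [div_lt_iff₀ hpos]; nlinarith
      have hgt : 1 < ((q:ℚ) * d) / ((d:ℚ) * ((q:ℚ) - 1)) := by
        rw [lt_div_iff₀ hpos]; nlinarith
      simp only [Set.mem_insert_iff, Set.mem_singleton_iff] at h1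
      rcases h1 with h1 | h1 | h1 | h1 | h1 <;> linarith
    interval_cases d <;> interval_cases q <;>
      simp only [Set.mem_insert_iff, Set.mem_singleton_iff, Prod.mk.injEq] <;>
      first
        | (norm_num; done)
        | (exfalso; have h1 := h 1 (by norm_num);
           simp only [Set.mem_insert_iff, Set.mem_singleton_iff] at h1; push_cast at h1; norm_num at h1)
  · intro hmem
    simp only [Set.mem_insert_iff, Set.mem_singleton_iff, Prod.mk.injEq] at hmem
    rcases hmem with ⟨rfl, rfl⟩ | ⟨rfl, rfl⟩ | ⟨rfl, rfl⟩ <;>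
      · intro i hi
        interval_cases i <;>
          simp only [Set.mem_insert_iff, Set.mem_singleton_iff] <;> norm_num
end

section
/- For integers n ≥ 2, k ≥ 1 with n ≥ k, let d = min(k, n−k) ≥ 1, and consider the numbers λ_j = ((d−j)(n−d−j) − j)/(d(n−d)) for j = 0,…,d. All λ_j lie in {0, 1, −1, 1/2, −1/2} if and only if (n, d) ∈ {(2,1), (3,1), (4,2)}. -/
set_option maxHeartbeats 800000 in
theorem stmt_11 (n k d : ℕ) (hn : 2 ≤ n) (hk : 1 ≤ k) (hkn : k ≤ n)
    (hd : d = min k (n - k)) (hd1 : 1 ≤ d) :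
    (∀ j : ℕ, j ≤ d →
        ((((d : ℚ) - j) * ((n : ℚ) - d - j) - j) / (d * ((n : ℚ) - d)) : ℚ) ∈
          ({0, 1, -1, 1/2, -1/2} : Set ℚ)) ↔
      (n, d) ∈ ({(2, 1), (3, 1), (4, 2)} : Set (ℕ × ℕ)) := by
  have hdn : 2 * d ≤ n := by omega
  constructor
  · intro h
    set b := n - d with hbdef
    have hnb : n = d + b := by omega
    have hdb : d ≤ b := by omega
    have hb1 : 1 ≤ b := by omega
    have hcast : (n : ℚ) = (d : ℚ) + (b : ℚ) := by rw [hnb]; push_cast; ring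
    have hd0 : (d:ℚ) ≠ 0 := Nat.cast_ne_zero.mpr (by omega)
    have hb0 : (b:ℚ) ≠ 0 := Nat.cast_ne_zero.mpr (by omega)
    have hD : (d:ℚ) * ((n:ℚ) - d) ≠ 0 := by
      rw [hcast]; ring_nf; simpa using mul_ne_zero hd0 hb0
    have h1 := h 1 hd1
    simp only [Set.mem_insert_iff, Set.mem_singleton_iff, div_eq_iff hD] at h1
    rw [hcast] at h1
    push_cast at h1
    rcases h1 with h1 | h1 | h1 | h1 | h1
    · -- λ₁ = 0 : d*b = d+b
      have hq : (d:ℚ) * b = d + b := by linear_combination h1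
      have hq' : d * b = d + b := by exact_mod_cast hq
      have hd2 : d ≤ 2 := by nlinarith
      interval_cases d <;> [omega; skip]
      have hb2 : b = 2 := by omega
      simp only [Set.mem_insert_iff, Set.mem_singleton_iff, Prod.mk.injEq, and_true]
      omega
    · -- λ₁ = 1 : d+b = 0, impossible
      have hq : (d:ℚ) + b = 0 := by linear_combination -h1
      have hq' : d + b = 0 := by exact_mod_cast hq
      omega
    · -- λ₁ = -1 : 2*d*b = d+b
      have hq : 2 * ((d:ℚ) * b) = d + b := by linear_combination h1
      have hq' : 2 * (d * b) = d + b := by exact_mod_cast hq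
      have hd2 : d ≤ 1 := by nlinarith
      have hdd : d = 1 := by omega
      subst hdd
      have hbb : b = 1 := by omega
      simp only [Set.mem_insert_iff, Set.mem_singleton_iff, Prod.mk.injEq, and_true]
      omega
    · -- λ₁ = 1/2 : d*b = 2*(d+b)
      have hq : (d:ℚ) * b = 2 * (d + b) := by linear_combination 2 * h1
      have hq' : d * b = 2 * (d + b) := by exact_mod_cast hq
      have hd4 : d ≤ 4 := by nlinarith
      interval_cases d
      · omega
      · omega
      · -- d=3, b=6, n=9 : contradicted by j=2
        have hb6 : b = 6 := by omega
        have hn9 : n = 9 := by omega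
        have h2 := h 2 (by omega)
        rw [hn9] at h2
        norm_num [Set.mem_insert_iff, Set.mem_singleton_iff] at h2
      · -- d=4, b=4, n=8 : contradicted by j=2
        have hb4 : b = 4 := by omega
        have hn8 : n = 8 := by omega
        have h2 := h 2 (by omega)
        rw [hn8] at h2
        norm_num [Set.mem_insert_iff, Set.mem_singleton_iff] at h2
    · -- λ₁ = -1/2 : 3*d*b = 2*(d+b)
      have hq : 3 * ((d:ℚ) * b) = 2 * (d + b) := by linear_combination 2 * h1
      have hq' : 3 * (d * b) = 2 * (d + b) := by exact_mod_cast hq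
      have hd2 : d ≤ 1 := by nlinarith
      have hdd : d = 1 := by omega
      subst hdd
      have hbb : b = 2 := by omega
      simp only [Set.mem_insert_iff, Set.mem_singleton_iff, Prod.mk.injEq, and_true]
      omega
  · intro h
    simp only [Set.mem_insert_iff, Set.mem_singleton_iff, Prod.mk.injEq] at h
    intro j hj
    rcases h with ⟨hn2, hd2⟩ | ⟨hn2, hd2⟩ | ⟨hn2, hd2⟩ <;> subst hn2 <;> subst hd2 <;>
      interval_cases j <;>
      norm_num [Set.mem_insert_iff, Set.mem_singleton_iff]
end

section
/- For d = 4 and any integer n ≥ 8, the set {−1/(n−4), (n−10)/(4n−16), (2n−14)/(4n−16), (3n−16)/(4n−16), 1} is not contained in {0, 1, −1, 1/2, −1/2}. -/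
theorem stmt_13 (n : ℕ) (hn : 8 ≤ n) :
    ¬ (({-1 / ((n : ℚ) - 4), ((n : ℚ) - 10) / (4 * n - 16),
          (2 * (n : ℚ) - 14) / (4 * n - 16), (3 * (n : ℚ) - 16) / (4 * n - 16),
          1} : Set ℚ) ⊆
        ({0, 1, -1, 1/2, -1/2} : Set ℚ)) := by
  intro h
  have hq : (8 : ℚ) ≤ (n : ℚ) := by exact_mod_cast hn
  have hd : (4 * (n : ℚ) - 16) ≠ 0 := by linarith
  have hx := h (show (2 * (n : ℚ) - 14) / (4 * n - 16) ∈ _ by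
    simp [Set.mem_insert_iff])
  simp only [Set.mem_insert_iff, Set.mem_singleton_iff] at hx
  rcases hx with hx | hx | hx | hx | hx <;>
    rw [div_eq_iff hd] at hx <;> linarith
end
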